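/- arXiv:1403.6752 — 2 statements merged into one kernel-verified Lean document; each statement's English description precedes it below -/
import Mathlib

section
/- Let B₁,…,B_k be symmetric invertible matrices, each with all entries nonzero, and let Θ be the block-diagonal matrix with blocks B₁,…,B_k. Let S be the support of Θ. Then the ℓ∞-operator norm of the inverse of the block [Θ^{−1} ⊗ Θ^{−1}] over S (that is, of ([Θ^{−1} ⊗ Θ^{−1}]_{SS})^{−1}) equals max_i ⦀B_i ⊗ B_i⦀_∞ = max_i ⦀B_i⦀_∞². -/
open Matrix
open scoped Kronecker Classical

/-- The `ℓ∞`-to-`ℓ∞` operator norm (maximum absolute row sum) of a matrix. -/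
noncomputable def linftyNorm {n m : Type*} [Fintype n] [Fintype m]
    (A : Matrix n m ℝ) : ℝ := ⨆ i, ∑ j, |A i j|

private lemma bddR {ι : Type*} [Finite ι] (f : ι → ℝ) : BddAbove (Set.range f) :=
  Set.Finite.bddAbove (Set.finite_range f)

private lemma ciSup_sigma' {ι : Type*} {κ : ι → Type*} [Fintype ι] [Nonempty ι]
    [∀ i, Fintype (κ i)] [∀ i, Nonempty (κ i)] (f : (Σ i, κ i) → ℝ) :
    (⨆ x, f x) = ⨆ i, ⨆ j, f ⟨i, j⟩ := by
  haveI : Nonempty (Σ i, κ i) := ⟨⟨Classical.arbitrary ι, Classical.arbitrary _⟩⟩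
  apply le_antisymm
  · exact ciSup_le fun ⟨i, j⟩ =>
      (le_ciSup (bddR _) j).trans (le_ciSup (bddR (fun i => ⨆ j, f ⟨i, j⟩)) i)
  · exact ciSup_le fun i => ciSup_le fun j => le_ciSup (bddR f) ⟨i, j⟩

private lemma ciSup_mul_self {ι : Type*} [Fintype ι] [Nonempty ι]
    (f : ι → ℝ) (hf : ∀ i, 0 ≤ f i) :
    (⨆ p : ι × ι, f p.1 * f p.2) = (⨆ i, f i) ^ 2 := by
  obtain ⟨i₀, hi₀⟩ := Finite.exists_max f
  have hM : (⨆ i, f i) = f i₀ := le_antisymm (ciSup_le hi₀) (le_ciSup (bddR f) i₀)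
  apply le_antisymm
  · refine ciSup_le fun ⟨a, c⟩ => ?_
    rw [sq, hM]
    exact mul_le_mul (hi₀ a) (hi₀ c) (hf c) (hf i₀)
  · rw [sq, hM]
    exact le_ciSup (bddR fun p : ι × ι => f p.1 * f p.2) (i₀, i₀)

private lemma linftyNorm_submatrix_equiv {n m : Type*} [Fintype n] [Fintype m] [Nonempty n]
    (A : Matrix m m ℝ) (e : n ≃ m) :
    linftyNorm (A.submatrix e e) = linftyNorm A := by
  unfold linftyNorm
  have hrow : ∀ i : n, (∑ j : n, |A.submatrix e e i j|) = ∑ j : m, |A (e i) j| := by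
    intro i
    exact Fintype.sum_equiv e _ _ fun j => rfl
  simp_rw [hrow]
  apply le_antisymm
  · exact ciSup_le fun i => le_ciSup (bddR fun i : m => ∑ j, |A i j|) (e i)
  · haveI : Nonempty m := e.symm.nonempty
    refine ciSup_le fun i => ?_
    have := le_ciSup (bddR fun i : n => ∑ j : m, |A (e i) j|) (e.symm i)
    simpa using this

private lemma blockDiagonal'_inv' {ι : Type*} [Fintype ι] [DecidableEq ι]
    {m' : ι → Type*} [∀ i, Fintype (m' i)] [∀ i, DecidableEq (m' i)]
    (C : ∀ i, Matrix (m' i) (m' i) ℝ) (h : ∀ i, IsUnit (C i).det) :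
    (blockDiagonal' C)⁻¹ = blockDiagonal' fun i => (C i)⁻¹ := by
  apply inv_eq_right_inv
  rw [← blockDiagonal'_mul]
  have : (fun k => C k * (C k)⁻¹) = fun _ => 1 := by
    funext i; exact mul_nonsing_inv _ (h i)
  rw [this]; exact blockDiagonal'_one

private lemma linftyNorm_blockDiagonal' {ι : Type*} [Fintype ι] [Nonempty ι] [DecidableEq ι]
    {m' : ι → Type*} [∀ i, Fintype (m' i)] [∀ i, Nonempty (m' i)]
    (C : ∀ i, Matrix (m' i) (m' i) ℝ) :
    linftyNorm (blockDiagonal' C) = ⨆ i, linftyNorm (C i) := by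
  unfold linftyNorm
  rw [ciSup_sigma']
  have hrow : ∀ (i : ι) (p : m' i),
      (∑ x : Σ j, m' j, |blockDiagonal' C ⟨i, p⟩ x|) = ∑ q, |C i p q| := by
    intro i p
    rw [← Finset.univ_sigma_univ, Finset.sum_sigma]
    rw [Fintype.sum_eq_single i]
    · simp
    · intro j hj
      refine Finset.sum_eq_zero fun q _ => ?_
      rw [blockDiagonal'_apply_ne _ _ _ (Ne.symm hj), abs_zero]
  simp_rw [hrow]

private lemma linftyNorm_kronecker {n : Type*} [Fintype n] [Nonempty n] (A : Matrix n n ℝ) :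
    linftyNorm (A ⊗ₖ A) = (linftyNorm A) ^ 2 := by
  unfold linftyNorm
  have hrow : ∀ p : n × n,
      (∑ q : n × n, |(A ⊗ₖ A) p q|) = (∑ j, |A p.1 j|) * (∑ j, |A p.2 j|) := by
    intro p
    simp only [kroneckerMap_apply, abs_mul]
    rw [Fintype.sum_prod_type]
    exact (Finset.sum_mul_sum Finset.univ Finset.univ
      (fun j => |A p.1 j|) (fun j => |A p.2 j|)).symm
  simp_rw [hrow]
  exact ciSup_mul_self _ fun i => Finset.sum_nonneg fun j _ => abs_nonneg _

/-- For a block-diagonal matrix `Θ` with symmetric invertible blocks `B₁,…,B_k`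
all of whose entries are nonzero, the `ℓ∞`-operator norm of the inverse of the
block of the Hessian `Γ = Θ⁻¹ ⊗ Θ⁻¹` indexed by the support `S` of `Θ` equals
`max_i ⦀B_i ⊗ B_i⦀_∞ = max_i ⦀B_i⦀_∞²`. -/
theorem blockDiagonal_hessian_inverse_norm
    (k : ℕ) (hk : 0 < k) (b : Fin k → ℕ) (hb : ∀ i, 0 < b i)
    (B : ∀ i : Fin k, Matrix (Fin (b i)) (Fin (b i)) ℝ)
    (hsymm : ∀ i, (B i).IsSymm) (hinv : ∀ i, IsUnit (B i).det)
    (hnz : ∀ i a c, B i a c ≠ 0)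
    (Θ : Matrix (Σ i, Fin (b i)) (Σ i, Fin (b i)) ℝ)
    (hΘ : Θ = Matrix.blockDiagonal' B)
    (Γ : Matrix ((Σ i, Fin (b i)) × (Σ i, Fin (b i)))
                ((Σ i, Fin (b i)) × (Σ i, Fin (b i))) ℝ)
    (hΓ : Γ = Θ⁻¹ ⊗ₖ Θ⁻¹) :
    linftyNorm ((Γ.submatrix
        (fun e : {e : (Σ i, Fin (b i)) × (Σ i, Fin (b i)) // Θ e.1 e.2 ≠ 0} => e.val)
        (fun e : {e : (Σ i, Fin (b i)) × (Σ i, Fin (b i)) // Θ e.1 e.2 ≠ 0} => e.val))⁻¹)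
      = (⨆ i, linftyNorm (B i ⊗ₖ B i)) ∧
    (⨆ i, linftyNorm (B i ⊗ₖ B i)) = ⨆ i, (linftyNorm (B i)) ^ 2 := by
  haveI : Nonempty (Fin k) := Fin.pos_iff_nonempty.mp hk
  haveI : ∀ i, Nonempty (Fin (b i)) := fun i => Fin.pos_iff_nonempty.mp (hb i)
  let φ : (Σ i, Fin (b i) × Fin (b i)) →
      {e : (Σ i, Fin (b i)) × (Σ i, Fin (b i)) // Θ e.1 e.2 ≠ 0} :=
    fun x => ⟨(⟨x.1, x.2.1⟩, ⟨x.1, x.2.2⟩), by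
      rw [hΘ, blockDiagonal'_apply_eq]; exact hnz _ _ _⟩
  have hφbij : Function.Bijective φ := by
    constructor
    · rintro ⟨i, a, c⟩ ⟨j, a', c'⟩ h
      simp only [φ, Subtype.mk.injEq, Prod.mk.injEq] at h
      obtain ⟨h1, h2⟩ := h
      obtain ⟨hij, ha⟩ := Sigma.mk.inj_iff.mp h1
      subst hij
      obtain ⟨-, hc⟩ := Sigma.mk.inj_iff.mp h2
      rw [eq_of_heq ha, eq_of_heq hc]
    · rintro ⟨⟨⟨i, a⟩, ⟨j, c⟩⟩, h⟩
      have hij : i = j := by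
        by_contra hne
        rw [hΘ, blockDiagonal'_apply_ne _ _ _ hne] at h
        exact h rfl
      subst hij
      exact ⟨⟨i, a, c⟩, rfl⟩
  let σ := Equiv.ofBijective φ hφbij
  haveI : Nonempty {e : (Σ i, Fin (b i)) × (Σ i, Fin (b i)) // Θ e.1 e.2 ≠ 0} :=
    ⟨φ ⟨Classical.arbitrary _, Classical.arbitrary _⟩⟩
  have hΘinv : Θ⁻¹ = blockDiagonal' (fun i => (B i)⁻¹) := by
    rw [hΘ]; exact blockDiagonal'_inv' B hinv
  set M : Matrix (Σ i, Fin (b i) × Fin (b i)) (Σ i, Fin (b i) × Fin (b i)) ℝ :=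
    blockDiagonal' (fun i => (B i)⁻¹ ⊗ₖ (B i)⁻¹) with hMdef
  have hsub : Γ.submatrix
      (fun e : {e : (Σ i, Fin (b i)) × (Σ i, Fin (b i)) // Θ e.1 e.2 ≠ 0} => e.val)
      (fun e : {e : (Σ i, Fin (b i)) × (Σ i, Fin (b i)) // Θ e.1 e.2 ≠ 0} => e.val)
      = M.submatrix σ.symm σ.symm := by
    ext x y
    obtain ⟨u, rfl⟩ := σ.surjective x
    obtain ⟨v, rfl⟩ := σ.surjective y
    simp only [submatrix_apply, Equiv.symm_apply_apply]
    obtain ⟨i, a, c⟩ := u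
    obtain ⟨j, a', c'⟩ := v
    show Γ (⟨i, a⟩, ⟨i, c⟩) (⟨j, a'⟩, ⟨j, c'⟩) = M ⟨i, (a, c)⟩ ⟨j, (a', c')⟩
    rw [hΓ, hΘinv, hMdef]
    by_cases hij : i = j
    · subst hij
      simp [Matrix.kroneckerMap_apply]
    · rw [kroneckerMap_apply]
      rw [show ((⟨i, a⟩, ⟨i, c⟩) : (Σ i, Fin (b i)) × (Σ i, Fin (b i))).1 = ⟨i, a⟩ from rfl]
      rw [blockDiagonal'_apply_ne _ _ _ hij, zero_mul,
        blockDiagonal'_apply_ne _ _ _ hij]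
  have hdetBB : ∀ i, IsUnit (B i ⊗ₖ B i).det := by
    intro i; rw [det_kronecker]; exact ((hinv i).pow _).mul ((hinv i).pow _)
  have hM : M = blockDiagonal' (fun i => (B i ⊗ₖ B i)⁻¹) := by
    rw [hMdef]
    exact congrArg _ (funext fun i => (inv_kronecker _ _).symm)
  have hMinv : M⁻¹ = blockDiagonal' (fun i => B i ⊗ₖ B i) := by
    rw [hM, blockDiagonal'_inv' _ (fun i => isUnit_nonsing_inv_det _ (hdetBB i))]
    exact congrArg _ (funext fun i => nonsing_inv_nonsing_inv _ (hdetBB i))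
  constructor
  · rw [hsub, inv_submatrix_equiv, hMinv, linftyNorm_submatrix_equiv,
      linftyNorm_blockDiagonal']
  · exact iSup_congr fun i => linftyNorm_kronecker (B i)
end

section
/- Suppose Θ̂, Θ*, Σ̂, Σ* are p×p matrices with Θ* invertible, Σ* = (Θ*)^{−1}, and suppose Σ̂ − Θ̂^{−1} + λẐ = 0 for an invertible Θ̂. Then, with W := Σ̂ − Σ* and T̂ := Θ̂ + Θ̂λẐΘ̂, one has T̂ − Θ* = −Θ*WΘ* − (Θ̂−Θ*)WΘ* − (Θ̂Σ̂ − I)(Θ̂−Θ*). -/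
open Matrix

/-- Algebraic decomposition for the de-sparsified graphical Lasso: if
`Σ̂ − Θ̂⁻¹ + λẐ = 0` with `Θ̂` invertible, `Σ* = (Θ*)⁻¹` with `Θ*` invertible,
then with `W := Σ̂ − Σ*` and `T̂ := Θ̂ + Θ̂ (λẐ) Θ̂`,
`T̂ − Θ* = −Θ*WΘ* − (Θ̂−Θ*)WΘ* − (Θ̂Σ̂ − I)(Θ̂−Θ*)`. -/
theorem desparsified_decomposition
    (p : ℕ)
    (Shat Sstar Θhat Θstar Zhat : Matrix (Fin p) (Fin p) ℝ) (lam : ℝ)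
    (hΘstar : IsUnit Θstar.det) (hSstar : Sstar = Θstar⁻¹)
    (hΘhat : IsUnit Θhat.det)
    (hKKT : Shat - Θhat⁻¹ + lam • Zhat = 0) :
    (Θhat + Θhat * (lam • Zhat) * Θhat) - Θstar
      = -(Θstar * (Shat - Sstar) * Θstar)
        - (Θhat - Θstar) * (Shat - Sstar) * Θstar
        - (Θhat * Shat - 1) * (Θhat - Θstar) := by
  have hz : lam • Zhat = Θhat⁻¹ - Shat := by
    have := hKKT
    linear_combination (norm := abel) hKKT
  have hinv : Θhat * Θhat⁻¹ = 1 := mul_nonsing_inv _ hΘhat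
  have hSs : Sstar * Θstar = 1 := by rw [hSstar]; exact nonsing_inv_mul _ hΘstar
  have hSs' : Θstar * Sstar = 1 := by rw [hSstar]; exact mul_nonsing_inv _ hΘstar
  rw [hz]
  have h1 : Θhat * (Θhat⁻¹ - Shat) * Θhat = Θhat - Θhat * Shat * Θhat := by
    rw [mul_sub, hinv]; noncomm_ring
  rw [h1]
  have expand : (Θhat * Shat - 1) * (Θhat - Θstar)
      = Θhat * Shat * Θhat - Θhat * Shat * Θstar - Θhat + Θstar := by noncomm_ring
  have e2 : Θstar * (Shat - Sstar) * Θstar = Θstar * Shat * Θstar - Θstar := by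
    have : Θstar * (Shat - Sstar) * Θstar
        = Θstar * Shat * Θstar - Θstar * Sstar * Θstar := by noncomm_ring
    rw [this, hSs', one_mul]
  have e3 : (Θhat - Θstar) * (Shat - Sstar) * Θstar
      = Θhat * Shat * Θstar - Θhat - Θstar * Shat * Θstar + Θstar := by
    have : (Θhat - Θstar) * (Shat - Sstar) * Θstar
        = Θhat * Shat * Θstar - Θhat * (Sstar * Θstar)
          - Θstar * Shat * Θstar + Θstar * (Sstar * Θstar) := by noncomm_ring
    rw [this, hSs]; noncomm_ring
  rw [expand, e2, e3]; noncomm_ring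
end
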